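/- arXiv:1812.05799 — 2 statements merged into one kernel-verified Lean document; each statement's English description precedes it below -/
import Mathlib

section
/- (Theorem 2.1 for the phase-field model.) Let $\lambda(i)=\lambda_-+\frac{\lambda_+-\lambda_-}{N+1}i$, $\lambda_x=\lambda(x\cdot e_1)$ and $f(\sigma,\phi)=e^{\beta\sum_{x\in\Lambda}\lambda_x(\sigma_x+\phi_x)}$. Then the measure $\mu=f\,\nu$ is invariant for the phase-field dynamics: for every function $g$ on $\{-1,1\}^\Lambda\times\mathbb{R}^\Lambda$ which for each fixed $\sigma$ is $C^\infty$ and compactly supported in $\phi$, one has $\int (Lg)\,f\,d\nu=0$. -/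
open MeasureTheory Real
open scoped NNReal ENNReal

/-- Sites of `Λ = {1,…,N}^d`: we encode the site with coordinates
`(x_1,…,x_d) ∈ {1,…,N}^d` by the function `i ↦ x_{i+1} - 1 : Fin d → Fin N`. -/
abbrev Site (d N : ℕ) := Fin d → Fin N

/-- Ginzburg–Landau variables `φ : Λ → ℝ`. -/
abbrev Conf (d N : ℕ) := Site d N → ℝ

/-- Ising spin configurations `σ : Λ → {-1,1}`, encoded by `Bool`. -/
abbrev Spin (d N : ℕ) := Site d N → Bool

/-- The spin value `±1` of a `Bool`-encoded spin. -/
def sval (b : Bool) : ℝ := if b then 1 else -1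

/-- The phase-field state space `{-1,1}^Λ × ℝ^Λ`. -/
abbrev PF (d N : ℕ) := Spin d N × Conf d N

/-- The site `x + e_i`, defined when `x + e_i ∈ Λ`,
i.e. when the `i`-th coordinate of `x` (in the `Fin N` encoding) satisfies `x i + 1 < N`. -/
def nxt {d N : ℕ} (x : Site d N) (i : Fin d) (h : (x i : ℕ) + 1 < N) : Site d N :=
  Function.update x i ⟨(x i : ℕ) + 1, h⟩

/-- The phase-field Hamiltonian
`H(σ,φ) = -∑_x ∑_i 1[x+e_i ∈ Λ] σ_x σ_{x+e_i} + (1/2) ∑_x φ_x²`. -/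
noncomputable def pfH {d N : ℕ} (z : PF d N) : ℝ :=
  -(∑ x, ∑ i, if h : (x i : ℕ) + 1 < N then sval (z.1 x) * sval (z.1 (nxt x i h)) else 0) +
    (1 / 2) * ∑ x, (z.2 x) ^ 2

/-- The spin flip `(σ,φ)^x`: replaces `(σ_x, φ_x)` by `(-σ_x, φ_x + 2σ_x)`. -/
def spinFlip {d N : ℕ} (x : Site d N) (z : PF d N) : PF d N :=
  (Function.update z.1 x (!(z.1 x)), Function.update z.2 x (z.2 x + 2 * sval (z.1 x)))

/-- The jump rate `c_x(σ,φ) = exp(-(β/2) [H((σ,φ)^x) - H(σ,φ)])`. -/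
noncomputable def rate {d N : ℕ} (β : ℝ) (x : Site d N) (z : PF d N) : ℝ :=
  Real.exp (-(β / 2) * (pfH (spinFlip x z) - pfH z))

/-- The Glauber generator `L_x g = c_x [g((σ,φ)^x) - g(σ,φ)]`. -/
noncomputable def Lflip {d N : ℕ} (β : ℝ) (x : Site d N) (g : PF d N → ℝ) :
    PF d N → ℝ :=
  fun z => rate β x z * (g (spinFlip x z) - g z)

/-- Partial derivative `∂g/∂φ_x` (in the Ginzburg–Landau variables only). -/
noncomputable def pdφ {d N : ℕ} (g : PF d N → ℝ) (x : Site d N) : PF d N → ℝ :=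
  fun z => fderiv ℝ (fun ψ => g (z.1, ψ)) z.2 (Pi.single x 1)

/-- The phase-field bulk operator on a bond `(x, y)`, `y = x + e_i`:
`L_{x,y} g = -(φ_x - φ_y)(∂_x g - ∂_y g) + β⁻¹ (∂_x - ∂_y)² g`. -/
noncomputable def pfLbond {d N : ℕ} (β : ℝ) (x y : Site d N) (g : PF d N → ℝ) :
    PF d N → ℝ :=
  fun z =>
    -((z.2 x - z.2 y) * (pdφ g x z - pdφ g y z)) +
      (1 / β) * (pdφ (pdφ g x) x z - pdφ (pdφ g x) y z - pdφ (pdφ g y) x z +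
        pdφ (pdφ g y) y z)

/-- The phase-field boundary operator with parameter `λb`:
`B_x g = -(φ_x - λb) ∂_x g + β⁻¹ ∂_x² g`. -/
noncomputable def pfBop {d N : ℕ} (β lamb : ℝ) (x : Site d N) (g : PF d N → ℝ) :
    PF d N → ℝ :=
  fun z => -((z.2 x - lamb) * pdφ g x z) + (1 / β) * pdφ (pdφ g x) x z

/-- The reference measure `dσ dφ`: counting measure in `σ`, Lebesgue in `φ`. -/
noncomputable def pfBase (d N : ℕ) : Measure (PF d N) :=
  (Measure.count : Measure (Spin d N)).prod (volume : Measure (Conf d N))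

/-- The (unnormalized) Gibbs density `exp(-β [H(σ,φ) - λ ∑_x (σ_x + φ_x)])`. -/
noncomputable def pfDensity {d N : ℕ} (β lam : ℝ) (z : PF d N) : ℝ :=
  Real.exp (-β * (pfH z - lam * ∑ x, (sval (z.1 x) + z.2 x)))

/-- The phase-field partition function. -/
noncomputable def pfZ (d N : ℕ) (β lam : ℝ) : ℝ≥0∞ :=
  ∫⁻ z, ENNReal.ofReal (pfDensity β lam z) ∂(pfBase d N)

/-- The phase-field Gibbs measure
`ν_λ(dσ,dφ) = Z_λ⁻¹ exp(-β [H(σ,φ) - λ ∑_x (σ_x + φ_x)]) dσ dφ`. -/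
noncomputable def pfNu (d N : ℕ) (β lam : ℝ) : Measure (PF d N) :=
  (pfZ d N β lam)⁻¹ •
    ((pfBase d N).withDensity fun z => ENNReal.ofReal (pfDensity β lam z))
/-- The linear chemical potential profile `λ(i) = λ₋ + (λ₊ - λ₋)/(N+1) · i`. -/
noncomputable def lamProfile (N : ℕ) (lamm lamp : ℝ) (i : ℕ) : ℝ :=
  lamm + (lamp - lamm) / (N + 1) * i

/-- `λ_x = λ(x · e_1)`; in our encoding `x · e_1 = (x i0 : ℕ) + 1`,
where `i0` is the index of the first coordinate direction. -/
noncomputable def lamSite {d N : ℕ} (lamm lamp : ℝ) (i0 : Fin d) (x : Site d N) : ℝ :=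
  lamProfile N lamm lamp ((x i0 : ℕ) + 1)

/-- The stationary density `f(σ,φ) = exp(β ∑_x λ_x (σ_x + φ_x))`. -/
noncomputable def pfF {d N : ℕ} (β lamm lamp : ℝ) (i0 : Fin d) (z : PF d N) : ℝ :=
  Real.exp (β * ∑ x, lamSite lamm lamp i0 x * (sval (z.1 x) + z.2 x))

/-- The full phase-field generator
`L = ∑_x L_x + ∑_{x,i : x+e_i ∈ Λ} L_{x,x+e_i} + ∑_{x : x·e_1 = 1} B_x + ∑_{x : x·e_1 = N} B_x`. -/
noncomputable def pfLgen {d N : ℕ} (β lamm lamp : ℝ) (i0 : Fin d)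
    (g : PF d N → ℝ) : PF d N → ℝ :=
  fun z =>
    (∑ x : Site d N, Lflip β x g z) +
      (∑ x : Site d N, ∑ i : Fin d,
        if h : (x i : ℕ) + 1 < N then pfLbond β x (nxt x i h) g z else 0) +
      (∑ x : Site d N, if (x i0 : ℕ) = 0 then pfBop β lamm x g z else 0) +
      (∑ x : Site d N, if (x i0 : ℕ) + 1 = N then pfBop β lamp x g z else 0)
namespace PFaux
variable {d N : ℕ}

/-- partial derivative of a function of `φ` alone -/
noncomputable def D1 (u : Conf d N → ℝ) (x : Site d N) : Conf d N → ℝ :=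
  fun φ => fderiv ℝ u φ (Pi.single x 1)

/-- the Gaussian-type weight (φ-part of the stationary density) -/
noncomputable def wgt (β lamm lamp : ℝ) (i0 : Fin d) : Conf d N → ℝ :=
  fun φ => Real.exp (∑ x, (β * lamSite lamm lamp i0 x * φ x - β / 2 * (φ x) ^ 2))

lemma D1_contDiff {u : Conf d N → ℝ} (hu : ContDiff ℝ (⊤ : ℕ∞) u) (x : Site d N) :
    ContDiff ℝ (⊤ : ℕ∞) (D1 u x) := by
  exact (hu.fderiv_right (m := (⊤ : ℕ∞)) (by exact_mod_cast le_top)).clm_apply contDiff_const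

lemma D1_support {u : Conf d N → ℝ} (hu : HasCompactSupport u) (x : Site d N) :
    HasCompactSupport (D1 u x) := by
  have := hu.fderiv ℝ
  exact this.comp_left (g := fun L : Conf d N →L[ℝ] ℝ => L (Pi.single x 1)) (by simp)

lemma wgt_hasFDerivAt (β lamm lamp : ℝ) (i0 : Fin d) (φ : Conf d N) :
    HasFDerivAt (wgt β lamm lamp i0)
      (wgt β lamm lamp i0 φ •
        (∑ x : Site d N, (β * lamSite lamm lamp i0 x - β * φ x) •
          (ContinuousLinearMap.proj x : Conf d N →L[ℝ] ℝ))) φ := by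
  have hP : HasFDerivAt
      (fun ψ : Conf d N => ∑ x, (β * lamSite lamm lamp i0 x * ψ x - β / 2 * (ψ x) ^ 2))
      (∑ x : Site d N, (β * lamSite lamm lamp i0 x - β * φ x) •
        (ContinuousLinearMap.proj x : Conf d N →L[ℝ] ℝ)) φ := by
    apply HasFDerivAt.fun_sum
    intro x _
    have h1 : HasDerivAt (fun t : ℝ => β * lamSite lamm lamp i0 x * t - β / 2 * t ^ 2)
        (β * lamSite lamm lamp i0 x - β * φ x) (φ x) := by
      have h := ((hasDerivAt_id (φ x)).const_mul (β * lamSite lamm lamp i0 x)).sub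
        ((hasDerivAt_pow 2 (φ x)).const_mul (β / 2))
      refine h.congr_deriv ?_
      ring
    have hproj : HasFDerivAt (fun ψ : Conf d N => ψ x)
        (ContinuousLinearMap.proj x : Conf d N →L[ℝ] ℝ) φ :=
      (ContinuousLinearMap.proj x : Conf d N →L[ℝ] ℝ).hasFDerivAt
    exact h1.comp_hasFDerivAt φ hproj
  exact hP.exp

lemma wgt_differentiable (β lamm lamp : ℝ) (i0 : Fin d) :
    Differentiable ℝ (wgt (d := d) (N := N) β lamm lamp i0) :=
  fun φ => (wgt_hasFDerivAt β lamm lamp i0 φ).differentiableAt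

lemma wgt_continuous (β lamm lamp : ℝ) (i0 : Fin d) :
    Continuous (wgt (d := d) (N := N) β lamm lamp i0) :=
  (wgt_differentiable β lamm lamp i0).continuous

lemma wgt_pos (β lamm lamp : ℝ) (i0 : Fin d) (φ : Conf d N) :
    0 < wgt β lamm lamp i0 φ := Real.exp_pos _

lemma wgt_fderiv_apply (β lamm lamp : ℝ) (i0 : Fin d) (φ : Conf d N) (y : Site d N) :
    fderiv ℝ (wgt β lamm lamp i0) φ (Pi.single y 1)
      = (β * lamSite lamm lamp i0 y - β * φ y) * wgt β lamm lamp i0 φ := by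
  rw [(wgt_hasFDerivAt β lamm lamp i0 φ).fderiv]
  simp only [ContinuousLinearMap.smul_apply, ContinuousLinearMap.sum_apply,
    ContinuousLinearMap.proj_apply, Pi.single_apply, smul_eq_mul, mul_ite, mul_one, mul_zero]
  rw [Finset.sum_ite_eq' Finset.univ y]
  simp [mul_comm]

end PFaux
namespace PFaux
variable {d N : ℕ}

lemma cts_int {u : Conf d N → ℝ} (hc : Continuous u) (hs : HasCompactSupport u) :
    MeasureTheory.Integrable u := hc.integrable_of_hasCompactSupport hs

/-- The integral of a partial derivative of a compactly supported C¹ function vanishes. -/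
lemma integral_D1_eq_zero {F : Conf d N → ℝ} (y : Site d N) (hF : Differentiable ℝ F)
    (hFc : Continuous (D1 F y)) (hFs : HasCompactSupport F) :
    ∫ φ, D1 F y φ = 0 := by
  have h1 : MeasureTheory.Integrable fun φ : Conf d N =>
      fderiv ℝ (fun _ : Conf d N => (1 : ℝ)) φ (Pi.single y 1) * F φ := by
    have : (fun φ : Conf d N =>
        fderiv ℝ (fun _ : Conf d N => (1 : ℝ)) φ (Pi.single y 1) * F φ) = fun _ => 0 := by
      funext φ; simp [fderiv_const]
    rw [this]; exact MeasureTheory.integrable_zero _ _ _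
  have h2 : MeasureTheory.Integrable fun φ : Conf d N =>
      (1 : ℝ) * fderiv ℝ F φ (Pi.single y 1) := by
    simp only [one_mul]
    exact cts_int hFc ((hFs.fderiv ℝ).comp_left (g := fun L : Conf d N →L[ℝ] ℝ =>
      L (Pi.single y 1)) (by simp))
  have h3 : MeasureTheory.Integrable fun φ : Conf d N => (1 : ℝ) * F φ := by
    simp only [one_mul]; exact cts_int hF.continuous hFs
  have key := integral_mul_fderiv_eq_neg_fderiv_mul_of_integrable
    (f := fun _ : Conf d N => (1 : ℝ)) (g := F) (v := Pi.single y 1)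
    h1 h2 h3 (fun x _ => differentiableAt_const 1) (fun x _ => hF x)
  simp only [one_mul, fderiv_fun_const, Pi.zero_apply, ContinuousLinearMap.zero_apply,
    zero_mul, MeasureTheory.integral_zero, neg_zero] at key
  exact key

/-- Product rule for `D1` against the weight. -/
lemma D1_mul_wgt (β lamm lamp : ℝ) (i0 : Fin d) {u : Conf d N → ℝ}
    (hu : Differentiable ℝ u) (y : Site d N) (φ : Conf d N) :
    D1 (fun ψ => u ψ * wgt β lamm lamp i0 ψ) y φ
      = D1 u y φ * wgt β lamm lamp i0 φ
        + u φ * ((β * lamSite lamm lamp i0 y - β * φ y) * wgt β lamm lamp i0 φ) := by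
  show (fderiv ℝ (fun ψ => u ψ * wgt β lamm lamp i0 ψ) φ) (Pi.single y 1) = _
  rw [fderiv_fun_mul (hu φ) (wgt_differentiable β lamm lamp i0 φ)]
  simp only [ContinuousLinearMap.add_apply, ContinuousLinearMap.smul_apply, smul_eq_mul]
  rw [wgt_fderiv_apply]
  show u φ * _ + wgt β lamm lamp i0 φ * D1 u y φ = _
  ring

lemma D1_sub {f g : Conf d N → ℝ} (hf : Differentiable ℝ f) (hg : Differentiable ℝ g)
    (a : Site d N) (φ : Conf d N) :
    D1 (fun ψ => f ψ - g ψ) a φ = D1 f a φ - D1 g a φ := by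
  show (fderiv ℝ (fun ψ => f ψ - g ψ) φ) (Pi.single a 1) = _
  rw [fderiv_fun_sub (hf φ) (hg φ)]; rfl

end PFaux
namespace PFaux
variable {d N : ℕ}

/-- Smoothness/support package for `u` and its `D1`s. -/
lemma hcs_sub {f g : Conf d N → ℝ} (hf : HasCompactSupport f) (hg : HasCompactSupport g) :
    HasCompactSupport fun φ => f φ - g φ := by
  apply HasCompactSupport.intro (hf.union hg)
  intro φ hφ
  simp only [Set.mem_union, not_or] at hφ
  rw [image_eq_zero_of_notMem_tsupport hφ.1, image_eq_zero_of_notMem_tsupport hφ.2, sub_zero]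

lemma pack {u : Conf d N → ℝ} (hu : ContDiff ℝ (⊤ : ℕ∞) u) (hus : HasCompactSupport u) (a : Site d N) :
    Continuous (D1 u a) ∧ HasCompactSupport (D1 u a) ∧ Differentiable ℝ (D1 u a) :=
  ⟨(D1_contDiff hu a).continuous, D1_support hus a,
    (D1_contDiff hu a).differentiable (by simp)⟩

/-- The boundary operator integral identity. -/
lemma bdry_int (β lamm lamp : ℝ) (hβ : β ≠ 0) (i0 : Fin d) {u : Conf d N → ℝ}
    (hu : ContDiff ℝ (⊤ : ℕ∞) u) (hus : HasCompactSupport u) (x : Site d N) (c : ℝ) :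
    ∫ φ : Conf d N, (-((φ x - c) * D1 u x φ) + 1 / β * D1 (D1 u x) x φ)
        * wgt β lamm lamp i0 φ
      = (c - lamSite lamm lamp i0 x) * ∫ φ, D1 u x φ * wgt β lamm lamp i0 φ := by
  set w := wgt (d := d) (N := N) β lamm lamp i0 with hwdef
  set lam := lamSite (N := N) lamm lamp i0 with hlamdef
  obtain ⟨hc, hs, hd⟩ := pack hu hus x
  set h : Conf d N → ℝ := D1 u x with hhdef
  have hwc := wgt_continuous (d := d) (N := N) β lamm lamp i0
  have hwd := wgt_differentiable (d := d) (N := N) β lamm lamp i0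
  -- the product h * w
  have hHd : Differentiable ℝ (fun ψ : Conf d N => h ψ * w ψ) := hd.mul hwd
  have hHs : HasCompactSupport (fun ψ : Conf d N => h ψ * w ψ) := by
    apply HasCompactSupport.mul_right hs
  have hD1Hc : Continuous (D1 (fun ψ : Conf d N => h ψ * w ψ) x) := by
    have : D1 (fun ψ : Conf d N => h ψ * w ψ) x = fun φ =>
        D1 h x φ * w φ + h φ * ((β * lam x - β * φ x) * w φ) := by
      funext φ; exact D1_mul_wgt β lamm lamp i0 hd x φ
    rw [this]
    exact (((pack (D1_contDiff hu x) hs x).1).mul hwc).add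
      (hc.mul (((continuous_const.sub (continuous_const.mul (continuous_apply x))).mul hwc)))
  have hzero : ∫ φ, D1 (fun ψ : Conf d N => h ψ * w ψ) x φ = 0 :=
    integral_D1_eq_zero x hHd hD1Hc hHs
  -- pointwise identity
  have key : ∀ φ : Conf d N, (-((φ x - c) * D1 u x φ) + 1 / β * D1 (D1 u x) x φ) * w φ
      = 1 / β * D1 (fun ψ : Conf d N => h ψ * w ψ) x φ + (c - lam x) * (h φ * w φ) := by
    intro φ
    rw [D1_mul_wgt β lamm lamp i0 hd x φ]
    show (-((φ x - c) * h φ) + 1 / β * D1 h x φ) * w φ = _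
    field_simp
    ring
  rw [MeasureTheory.integral_congr_ae (Filter.Eventually.of_forall key)]
  have i1 : MeasureTheory.Integrable fun φ : Conf d N =>
      1 / β * D1 (fun ψ : Conf d N => h ψ * w ψ) x φ :=
    (cts_int hD1Hc (hHs.fderiv ℝ |>.comp_left (g := fun L : Conf d N →L[ℝ] ℝ =>
      L (Pi.single x 1)) (by simp))).const_mul _
  have i2 : MeasureTheory.Integrable fun φ : Conf d N => (c - lam x) * (h φ * w φ) :=
    ((cts_int (hc.mul hwc) (hs.mul_right)).const_mul _)
  rw [MeasureTheory.integral_add i1 i2, MeasureTheory.integral_const_mul,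
    MeasureTheory.integral_const_mul, hzero]
  ring

/-- The bond operator integral identity. -/
lemma bond_int (β lamm lamp : ℝ) (hβ : β ≠ 0) (i0 : Fin d) {u : Conf d N → ℝ}
    (hu : ContDiff ℝ (⊤ : ℕ∞) u) (hus : HasCompactSupport u) (x y : Site d N) :
    ∫ φ : Conf d N,
        (-((φ x - φ y) * (D1 u x φ - D1 u y φ))
          + 1 / β * (D1 (D1 u x) x φ - D1 (D1 u x) y φ - D1 (D1 u y) x φ
              + D1 (D1 u y) y φ)) * wgt β lamm lamp i0 φ
      = (lamSite lamm lamp i0 y - lamSite lamm lamp i0 x) *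
          ((∫ φ, D1 u x φ * wgt β lamm lamp i0 φ)
            - ∫ φ, D1 u y φ * wgt β lamm lamp i0 φ) := by
  set w := wgt (d := d) (N := N) β lamm lamp i0 with hwdef
  set lam := lamSite (N := N) lamm lamp i0 with hlamdef
  obtain ⟨hcx, hsx, hdx⟩ := pack hu hus x
  obtain ⟨hcy, hsy, hdy⟩ := pack hu hus y
  have hwc := wgt_continuous (d := d) (N := N) β lamm lamp i0
  have hwd := wgt_differentiable (d := d) (N := N) β lamm lamp i0
  set h : Conf d N → ℝ := fun φ => D1 u x φ - D1 u y φ with hhdef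
  have hhc : Continuous h := hcx.sub hcy
  have hhs : HasCompactSupport h := hcs_sub hsx hsy
  have hhd : Differentiable ℝ h := hdx.sub hdy
  have hD1h : ∀ (a : Site d N) (φ : Conf d N),
      D1 h a φ = D1 (D1 u x) a φ - D1 (D1 u y) a φ := fun a φ => D1_sub hdx hdy a φ
  have hHd : Differentiable ℝ (fun ψ : Conf d N => h ψ * w ψ) := hhd.mul hwd
  have hHs : HasCompactSupport (fun ψ : Conf d N => h ψ * w ψ) := hhs.mul_right
  have hD1Hc : ∀ a : Site d N, Continuous (D1 (fun ψ : Conf d N => h ψ * w ψ) a) := by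
    intro a
    have : D1 (fun ψ : Conf d N => h ψ * w ψ) a = fun φ =>
        D1 h a φ * w φ + h φ * ((β * lam a - β * φ a) * w φ) := by
      funext φ; exact D1_mul_wgt β lamm lamp i0 hhd a φ
    rw [this]
    have hD1hc : Continuous (D1 h a) := by
      have : D1 h a = fun φ => D1 (D1 u x) a φ - D1 (D1 u y) a φ := by
        funext φ; exact hD1h a φ
      rw [this]
      exact ((pack (D1_contDiff hu x) hsx a).1).sub ((pack (D1_contDiff hu y) hsy a).1)
    exact (hD1hc.mul hwc).add
      (hhc.mul (((continuous_const.sub (continuous_const.mul (continuous_apply a))).mul hwc)))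
  have hzero : ∀ a : Site d N, ∫ φ, D1 (fun ψ : Conf d N => h ψ * w ψ) a φ = 0 := fun a =>
    integral_D1_eq_zero a hHd (hD1Hc a) hHs
  have key : ∀ φ : Conf d N,
      (-((φ x - φ y) * (D1 u x φ - D1 u y φ))
        + 1 / β * (D1 (D1 u x) x φ - D1 (D1 u x) y φ - D1 (D1 u y) x φ
            + D1 (D1 u y) y φ)) * w φ
      = 1 / β * D1 (fun ψ : Conf d N => h ψ * w ψ) x φ
        - 1 / β * D1 (fun ψ : Conf d N => h ψ * w ψ) y φ
        + (lam y - lam x) * (h φ * w φ) := by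
    intro φ
    rw [D1_mul_wgt β lamm lamp i0 hhd x φ, D1_mul_wgt β lamm lamp i0 hhd y φ,
      hD1h x φ, hD1h y φ]
    show (-((φ x - φ y) * h φ) + 1 / β * _) * w φ = _
    field_simp
    ring
  rw [MeasureTheory.integral_congr_ae (Filter.Eventually.of_forall key)]
  have iD : ∀ a : Site d N, MeasureTheory.Integrable fun φ : Conf d N =>
      1 / β * D1 (fun ψ : Conf d N => h ψ * w ψ) a φ := fun a =>
    (cts_int (hD1Hc a) (hHs.fderiv ℝ |>.comp_left (g := fun L : Conf d N →L[ℝ] ℝ =>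
      L (Pi.single a 1)) (by simp))).const_mul _
  have i2 : MeasureTheory.Integrable fun φ : Conf d N => (lam y - lam x) * (h φ * w φ) :=
    ((cts_int (hhc.mul hwc) (hhs.mul_right)).const_mul _)
  have iDsub : MeasureTheory.Integrable fun φ : Conf d N =>
      1 / β * D1 (fun ψ : Conf d N => h ψ * w ψ) x φ
        - 1 / β * D1 (fun ψ : Conf d N => h ψ * w ψ) y φ := (iD x).sub (iD y)
  rw [MeasureTheory.integral_add iDsub i2,
    MeasureTheory.integral_sub (iD x) (iD y),
    MeasureTheory.integral_const_mul, MeasureTheory.integral_const_mul,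
    MeasureTheory.integral_const_mul, hzero x, hzero y]
  have : ∫ φ, h φ * w φ = (∫ φ, D1 u x φ * w φ) - ∫ φ, D1 u y φ * w φ := by
    rw [← MeasureTheory.integral_sub (f := fun φ => D1 u x φ * w φ) (g := fun φ => D1 u y φ * w φ) (cts_int (hcx.mul hwc) hsx.mul_right)
      (cts_int (hcy.mul hwc) hsy.mul_right)]
    apply MeasureTheory.integral_congr_ae; filter_upwards with φ
    show h φ * w φ = _
    rw [hhdef]; ring
  rw [this]
  ring

end PFaux
namespace PFaux
variable {d N : ℕ}

lemma lamSite_nxt_ne (lamm lamp : ℝ) (i0 : Fin d) (x : Site d N) (i : Fin d)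
    (h : (x i : ℕ) + 1 < N) (hne : i ≠ i0) :
    lamSite lamm lamp i0 (nxt x i h) = lamSite lamm lamp i0 x := by
  unfold lamSite nxt
  rw [Function.update_of_ne (Ne.symm hne)]

lemma lamSite_nxt_eq (lamm lamp : ℝ) (i0 : Fin d) (x : Site d N)
    (h : (x i0 : ℕ) + 1 < N) :
    lamSite lamm lamp i0 (nxt x i0 h) - lamSite lamm lamp i0 x
      = (lamp - lamm) / (N + 1) := by
  unfold lamSite nxt lamProfile
  rw [Function.update_self]
  push_cast
  ring

lemma lamSite_bot (lamm lamp : ℝ) (i0 : Fin d) (x : Site d N) (h : (x i0 : ℕ) = 0) :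
    lamm - lamSite lamm lamp i0 x = -((lamp - lamm) / (N + 1)) := by
  unfold lamSite lamProfile
  rw [h]
  push_cast
  ring

lemma lamSite_top (lamm lamp : ℝ) (i0 : Fin d) (x : Site d N) (h : (x i0 : ℕ) + 1 = N) :
    lamp - lamSite lamm lamp i0 x = (lamp - lamm) / (N + 1) := by
  unfold lamSite lamProfile
  rw [h]
  have hN1 : (N : ℝ) + 1 ≠ 0 := by positivity
  field_simp
  ring

/-- The telescoping cancellation between bulk bonds and boundary terms. -/
lemma telescope (lamm lamp : ℝ) (i0 : Fin d) (hN0 : 0 < N) (I : Site d N → ℝ) :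
    (∑ x : Site d N, ∑ i : Fin d, if h : (x i : ℕ) + 1 < N then
        (lamSite lamm lamp i0 (nxt x i h) - lamSite lamm lamp i0 x) * (I x - I (nxt x i h))
      else 0)
    + (∑ x : Site d N, if (x i0 : ℕ) = 0 then (lamm - lamSite lamm lamp i0 x) * I x else 0)
    + (∑ x : Site d N, if (x i0 : ℕ) + 1 = N then (lamp - lamSite lamm lamp i0 x) * I x else 0)
      = 0 := by
  classical
  set δ : ℝ := (lamp - lamm) / (N + 1) with hδ
  -- reduce double sum to the i0 direction
  have step1 : ∀ x : Site d N,
      (∑ i : Fin d, if h : (x i : ℕ) + 1 < N then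
          (lamSite lamm lamp i0 (nxt x i h) - lamSite lamm lamp i0 x) * (I x - I (nxt x i h))
        else 0)
      = (if h : (x i0 : ℕ) + 1 < N then δ * (I x - I (nxt x i0 h)) else 0) := by
    intro x
    rw [Finset.sum_eq_single_of_mem i0 (Finset.mem_univ i0)]
    · by_cases h : (x i0 : ℕ) + 1 < N
      · rw [dif_pos h, dif_pos h, lamSite_nxt_eq]
      · rw [dif_neg h, dif_neg h]
    · intro i _ hi
      by_cases h : (x i : ℕ) + 1 < N
      · rw [dif_pos h, lamSite_nxt_ne lamm lamp i0 x i h hi, sub_self, zero_mul]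
      · rw [dif_neg h]
  rw [Finset.sum_congr rfl (fun x _ => step1 x)]
  -- boundary coefficients
  have step2 : (∑ x : Site d N, if (x i0 : ℕ) = 0
        then (lamm - lamSite lamm lamp i0 x) * I x else 0)
      = -δ * ∑ x : Site d N, (if (x i0 : ℕ) = 0 then I x else 0) := by
    rw [Finset.mul_sum]
    refine Finset.sum_congr rfl fun x _ => ?_
    by_cases h : (x i0 : ℕ) = 0
    · rw [if_pos h, if_pos h, lamSite_bot lamm lamp i0 x h]
      all_goals ring
    · rw [if_neg h, if_neg h, mul_zero]
  have step3 : (∑ x : Site d N, if (x i0 : ℕ) + 1 = N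
        then (lamp - lamSite lamm lamp i0 x) * I x else 0)
      = δ * ∑ x : Site d N, (if (x i0 : ℕ) + 1 = N then I x else 0) := by
    rw [Finset.mul_sum]
    refine Finset.sum_congr rfl fun x _ => ?_
    by_cases h : (x i0 : ℕ) + 1 = N
    · rw [if_pos h, if_pos h, lamSite_top lamm lamp i0 x h]
    · rw [if_neg h, if_neg h, mul_zero]
  rw [step2, step3]
  -- split the telescoping sum
  have step4 : (∑ x : Site d N, if h : (x i0 : ℕ) + 1 < N
        then δ * (I x - I (nxt x i0 h)) else 0)
      = δ * ((∑ x : Site d N, if (x i0 : ℕ) + 1 < N then I x else 0)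
          - ∑ x : Site d N, if h : (x i0 : ℕ) + 1 < N then I (nxt x i0 h) else 0) := by
    rw [mul_sub, Finset.mul_sum, Finset.mul_sum, ← Finset.sum_sub_distrib]
    refine Finset.sum_congr rfl fun x _ => ?_
    by_cases h : (x i0 : ℕ) + 1 < N
    · rw [dif_pos h, if_pos h, dif_pos h]; ring
    · rw [dif_neg h, if_neg h, dif_neg h]; ring
  rw [step4]
  -- reindex the shifted sum
  have step5 : (∑ x : Site d N, if h : (x i0 : ℕ) + 1 < N then I (nxt x i0 h) else 0)
      = ∑ x : Site d N, if 0 < (x i0 : ℕ) then I x else 0 := by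
    have e1 : (∑ x : Site d N, if h : (x i0 : ℕ) + 1 < N then I (nxt x i0 h) else 0)
        = ∑ x ∈ Finset.univ.filter (fun x : Site d N => (x i0 : ℕ) + 1 < N),
            I (Function.update x i0 ⟨((x i0 : ℕ) + 1) % N, Nat.mod_lt _ hN0⟩) := by
      rw [Finset.sum_filter]
      refine Finset.sum_congr rfl fun x _ => ?_
      by_cases h : (x i0 : ℕ) + 1 < N
      · rw [dif_pos h, if_pos h]
        have : nxt x i0 h = Function.update x i0 ⟨((x i0 : ℕ) + 1) % N, Nat.mod_lt _ hN0⟩ := by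
          exact congrArg (Function.update x i0) (Fin.mk_eq_mk.mpr (Nat.mod_eq_of_lt h).symm)
        rw [this]
      · rw [dif_neg h, if_neg h]
    have e2 : (∑ x : Site d N, if 0 < (x i0 : ℕ) then I x else 0)
        = ∑ x ∈ Finset.univ.filter (fun x : Site d N => 0 < (x i0 : ℕ)), I x :=
      (Finset.sum_filter _ _).symm
    rw [e1, e2]
    apply Finset.sum_nbij'
      (i := fun x => Function.update x i0 ⟨((x i0 : ℕ) + 1) % N, Nat.mod_lt _ hN0⟩)
      (j := fun x => Function.update x i0
        ⟨(x i0 : ℕ) - 1, lt_of_le_of_lt (Nat.sub_le _ _) (x i0).isLt⟩)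
    · intro a ha
      simp only [Finset.mem_filter, Finset.mem_univ, true_and, Function.update_self] at ha ⊢
      simp [Nat.mod_eq_of_lt ha]
    · intro a ha
      simp only [Finset.mem_filter, Finset.mem_univ, true_and, Function.update_self] at ha ⊢
      have := (a i0).isLt
      omega
    · intro a ha
      simp only [Finset.mem_filter, Finset.mem_univ, true_and] at ha
      funext j
      rcases eq_or_ne j i0 with h' | hj
      · rw [h']
        simp only [Function.update_self]
        exact Fin.ext (by simp [Nat.mod_eq_of_lt ha])
      · simp only [Function.update_of_ne hj]
    · intro a ha
      simp only [Finset.mem_filter, Finset.mem_univ, true_and] at ha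
      funext j
      rcases eq_or_ne j i0 with h' | hj
      · rw [h']
        simp only [Function.update_self]
        refine Fin.ext ?_
        have h1 := (a i0).isLt
        have h2 : (a i0 : ℕ) - 1 + 1 < N := by omega
        simp only [Nat.mod_eq_of_lt h2]
        omega
      · simp only [Function.update_of_ne hj]
    · intro a _
      rfl
  rw [step5]
  -- final algebra
  set S := ∑ x : Site d N, I x with hS
  have hA : (∑ x : Site d N, if (x i0 : ℕ) + 1 < N then I x else 0)
      + (∑ x : Site d N, if (x i0 : ℕ) + 1 = N then I x else 0) = S := by
    rw [← Finset.sum_add_distrib]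
    refine Finset.sum_congr rfl fun x _ => ?_
    have := (x i0).isLt
    by_cases h : (x i0 : ℕ) + 1 < N
    · rw [if_pos h, if_neg (by omega)]; ring
    · rw [if_neg h, if_pos (by omega)]; ring
  have hB : (∑ x : Site d N, if 0 < (x i0 : ℕ) then I x else 0)
      + (∑ x : Site d N, if (x i0 : ℕ) = 0 then I x else 0) = S := by
    rw [← Finset.sum_add_distrib]
    refine Finset.sum_congr rfl fun x _ => ?_
    by_cases h : 0 < (x i0 : ℕ)
    · rw [if_pos h, if_neg (by omega)]; ring
    · rw [if_neg h, if_pos (by omega)]; ring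
  linear_combination δ * hA - δ * hB

end PFaux
namespace PFaux
open MeasureTheory
variable {d N : ℕ}

lemma sval_not (b : Bool) : sval (!b) = -sval b := by cases b <;> simp [sval]

lemma spinFlip_spinFlip (x : Site d N) (z : PF d N) : spinFlip x (spinFlip x z) = z := by
  unfold spinFlip
  refine Prod.ext ?_ ?_
  · funext y
    rcases eq_or_ne y x with rfl | h
    · simp [Function.update_self, Bool.not_not]
    · simp [Function.update_of_ne h]
  · funext y
    rcases eq_or_ne y x with rfl | h
    · simp only [Function.update_idem, Function.update_self]
      rw [sval_not]
      ring
    · simp [Function.update_of_ne h]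

lemma flip_sum_inv (c : Site d N → ℝ) (x : Site d N) (z : PF d N) :
    (∑ y, c y * (sval ((spinFlip x z).1 y) + (spinFlip x z).2 y))
      = ∑ y, c y * (sval (z.1 y) + z.2 y) := by
  refine Finset.sum_congr rfl fun y _ => ?_
  rcases eq_or_ne y x with rfl | h
  · simp only [spinFlip, Function.update_self]
    rw [sval_not]
    ring
  · simp [spinFlip, Function.update_of_ne h]

lemma pfDensity_zero (β : ℝ) (z : PF d N) : pfDensity β 0 z = Real.exp (-β * pfH z) := by
  unfold pfDensity
  exact congrArg Real.exp (by ring)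

/-- The flipped configuration, explicitly as a translation in `φ`. -/
lemma spinFlip_eq (x : Site d N) (σ : Spin d N) (φ : Conf d N) :
    spinFlip x (σ, φ)
      = (Function.update σ x (!(σ x)), φ + ((2 * sval (σ x)) • (Pi.single x 1 : Conf d N))) := by
  unfold spinFlip
  refine Prod.ext rfl ?_
  funext y
  rcases eq_or_ne y x with rfl | h
  · simp [Function.update_self]
  · simp [Function.update_of_ne h, Pi.single_apply, h]

lemma flip_integral (x : Site d N) (F : PF d N → ℝ) :
    (∑ σ : Spin d N, ∫ φ : Conf d N, F (spinFlip x (σ, φ)))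
      = ∑ σ : Spin d N, ∫ φ : Conf d N, F (σ, φ) := by
  have h1 : ∀ σ : Spin d N, (∫ φ : Conf d N, F (spinFlip x (σ, φ)))
      = ∫ φ : Conf d N, F (Function.update σ x (!(σ x)), φ) := by
    intro σ
    have e : (fun φ : Conf d N => F (spinFlip x (σ, φ)))
        = fun φ => F (Function.update σ x (!(σ x)), φ + ((2 * sval (σ x)) • (Pi.single x 1 : Conf d N))) := by
      funext φ; rw [spinFlip_eq]
    rw [e]
    exact MeasureTheory.integral_add_right_eq_self
      (fun φ => F (Function.update σ x (!(σ x)), φ)) (((2 * sval (σ x)) • (Pi.single x 1 : Conf d N)))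
  rw [Finset.sum_congr rfl fun σ _ => h1 σ]
  have hinv : Function.Involutive (fun σ : Spin d N => Function.update σ x (!(σ x))) := by
    intro σ
    funext y
    rcases eq_or_ne y x with rfl | h
    · simp [Function.update_self, Bool.not_not]
    · simp [Function.update_of_ne h]
  exact Fintype.sum_bijective _ hinv.bijective _ _ (fun σ => rfl)

lemma pfH_slice_cont (σ : Spin d N) : Continuous fun ψ : Conf d N => pfH (σ, ψ) := by
  have e : (fun ψ : Conf d N => pfH (σ, ψ))
      = fun ψ : Conf d N =>
        (-(∑ x : Site d N, ∑ i : Fin d, if h : (x i : ℕ) + 1 < N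
            then sval (σ x) * sval (σ (nxt x i h)) else 0))
          + 1 / 2 * ∑ x, (ψ x) ^ 2 := rfl
  rw [e]
  apply continuous_const.add
  exact continuous_const.mul (continuous_finset_sum _ fun y _ => (continuous_apply y).pow 2)

lemma pfF_slice_cont (β lamm lamp : ℝ) (i0 : Fin d) (σ : Spin d N) :
    Continuous fun ψ : Conf d N => pfF β lamm lamp i0 (σ, ψ) := by
  have e : (fun ψ : Conf d N => pfF β lamm lamp i0 (σ, ψ))
      = fun ψ : Conf d N =>
        Real.exp (β * ∑ x, lamSite lamm lamp i0 x * (sval (σ x) + ψ x)) := rfl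
  rw [e]
  apply Real.continuous_exp.comp
  apply continuous_const.mul
  exact continuous_finset_sum _ fun y _ =>
    continuous_const.mul (continuous_const.add (continuous_apply y))

lemma pfDensity_slice_cont (β lam : ℝ) (σ : Spin d N) :
    Continuous fun ψ : Conf d N => pfDensity β lam (σ, ψ) := by
  have e : (fun ψ : Conf d N => pfDensity β lam (σ, ψ))
      = fun ψ : Conf d N =>
        Real.exp (-β * (pfH (σ, ψ) - lam * ∑ x, (sval (σ x) + ψ x))) := rfl
  rw [e]
  apply Real.continuous_exp.comp
  apply continuous_const.mul
  exact (pfH_slice_cont σ).sub (continuous_const.mul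
    (continuous_finset_sum _ fun y _ => continuous_const.add (continuous_apply y)))

lemma rate_slice_cont (β : ℝ) (x : Site d N) (σ : Spin d N) :
    Continuous fun ψ : Conf d N => rate β x (σ, ψ) := by
  unfold rate
  apply Real.continuous_exp.comp
  apply continuous_const.mul
  apply Continuous.sub
  · have e : (fun ψ : Conf d N => pfH (spinFlip x (σ, ψ)))
        = fun ψ => pfH (Function.update σ x (!(σ x)), ψ + ((2 * sval (σ x)) • (Pi.single x 1 : Conf d N))) := by
      funext ψ; rw [spinFlip_eq]
    rw [e]
    exact (pfH_slice_cont _).comp (continuous_id.add continuous_const)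
  · exact pfH_slice_cont σ

lemma K_flip (β lamm lamp : ℝ) (i0 : Fin d) (x : Site d N) (z : PF d N) :
    rate β x (spinFlip x z)
        * (pfF β lamm lamp i0 (spinFlip x z) * pfDensity β 0 (spinFlip x z))
      = rate β x z * (pfF β lamm lamp i0 z * pfDensity β 0 z) := by
  unfold rate pfF
  rw [pfDensity_zero, pfDensity_zero, spinFlip_spinFlip, flip_sum_inv]
  rw [← Real.exp_add, ← Real.exp_add, ← Real.exp_add, ← Real.exp_add]
  congr 1
  ring

lemma flip_part (β lamm lamp : ℝ) (i0 : Fin d) (x : Site d N) (g : PF d N → ℝ)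
    (hgc : ∀ σ : Spin d N, Continuous fun φ => g (σ, φ))
    (hgs : ∀ σ : Spin d N, HasCompactSupport fun φ => g (σ, φ)) :
    (∑ σ : Spin d N, ∫ φ : Conf d N,
        Lflip β x g (σ, φ) * (pfF β lamm lamp i0 (σ, φ) * pfDensity β 0 (σ, φ))) = 0 := by
  classical
  set K : PF d N → ℝ :=
    fun z => rate β x z * (pfF β lamm lamp i0 z * pfDensity β 0 z) with hK
  have hKc : ∀ σ : Spin d N, Continuous fun φ => K (σ, φ) := fun σ =>
    (rate_slice_cont β x σ).mul
      ((pfF_slice_cont β lamm lamp i0 σ).mul (pfDensity_slice_cont β 0 σ))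
  have int2 : ∀ σ : Spin d N, Integrable fun φ : Conf d N => K (σ, φ) * g (σ, φ) := fun σ =>
    cts_int ((hKc σ).mul (hgc σ)) ((hgs σ).mul_left)
  have int1 : ∀ σ : Spin d N,
      Integrable fun φ : Conf d N => K (spinFlip x (σ, φ)) * g (spinFlip x (σ, φ)) := by
    intro σ
    have e : (fun φ : Conf d N => K (spinFlip x (σ, φ)) * g (spinFlip x (σ, φ)))
        = (fun ψ : Conf d N => K (Function.update σ x (!(σ x)), ψ)
            * g (Function.update σ x (!(σ x)), ψ))
          ∘ (Homeomorph.addRight ((2 * sval (σ x)) • (Pi.single x 1 : Conf d N))) := by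
      funext φ
      simp only [Function.comp_apply, Homeomorph.coe_addRight]
      rw [spinFlip_eq]
    rw [e]
    apply cts_int
    · exact ((hKc _).mul (hgc _)).comp (Homeomorph.addRight _).continuous
    · exact (((hgs _).mul_left).comp_homeomorph _)
  have split : ∀ σ : Spin d N,
      (∫ φ : Conf d N, Lflip β x g (σ, φ)
          * (pfF β lamm lamp i0 (σ, φ) * pfDensity β 0 (σ, φ)))
        = (∫ φ : Conf d N, K (spinFlip x (σ, φ)) * g (spinFlip x (σ, φ)))
          - ∫ φ : Conf d N, K (σ, φ) * g (σ, φ) := by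
    intro σ
    rw [← MeasureTheory.integral_sub (int1 σ) (int2 σ)]
    apply MeasureTheory.integral_congr_ae
    filter_upwards with φ
    simp only [hK]
    rw [K_flip β lamm lamp i0 x (σ, φ)]
    unfold Lflip
    ring
  rw [Finset.sum_congr rfl fun σ _ => split σ, Finset.sum_sub_distrib]
  rw [flip_integral x (fun z => K z * g z)]
  exact sub_self _

end PFaux
namespace PFaux
open MeasureTheory
variable {d N : ℕ}

lemma hcs_zero : HasCompactSupport fun _ : Conf d N => (0 : ℝ) := by
  show IsCompact (tsupport fun _ : Conf d N => (0 : ℝ))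
  have : tsupport (fun _ : Conf d N => (0 : ℝ)) = ∅ := by
    rw [tsupport_eq_empty_iff]; rfl
  rw [this]; exact isCompact_empty

lemma hcs_sum {ι : Type*} (s : Finset ι) (f : ι → Conf d N → ℝ)
    (h : ∀ i ∈ s, HasCompactSupport (f i)) :
    HasCompactSupport fun φ => ∑ i ∈ s, f i φ := by
  classical
  induction s using Finset.induction_on with
  | empty => simpa using hcs_zero
  | @insert a s ha ih =>
      simp only [Finset.sum_insert ha]
      exact (h a (Finset.mem_insert_self a s)).add
        (ih fun i hi => h i (Finset.mem_insert_of_mem hi))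

/-- The spin-dependent constant in the factorized stationary density. -/
noncomputable def spinC (β lamm lamp : ℝ) (i0 : Fin d) (σ : Spin d N) : ℝ :=
  Real.exp (β * (∑ x : Site d N, ∑ i : Fin d, if h : (x i : ℕ) + 1 < N
      then sval (σ x) * sval (σ (nxt x i h)) else 0)
    + β * ∑ x : Site d N, lamSite lamm lamp i0 x * sval (σ x))

lemma dens_factor (β lamm lamp : ℝ) (i0 : Fin d) (σ : Spin d N) (φ : Conf d N) :
    pfF β lamm lamp i0 (σ, φ) * pfDensity β 0 (σ, φ)
      = spinC β lamm lamp i0 σ * wgt β lamm lamp i0 φ := by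
  rw [pfDensity_zero]
  unfold pfF spinC wgt pfH
  rw [← Real.exp_add, ← Real.exp_add]
  congr 1
  have e1 : (∑ x : Site d N, lamSite lamm lamp i0 x * (sval ((σ, φ).1 x) + (σ, φ).2 x))
      = (∑ x : Site d N, lamSite lamm lamp i0 x * sval (σ x))
        + ∑ x : Site d N, lamSite lamm lamp i0 x * φ x := by
    rw [← Finset.sum_add_distrib]
    exact Finset.sum_congr rfl fun x _ => by ring
  have e2 : (∑ x : Site d N, (β * lamSite lamm lamp i0 x * φ x - β / 2 * (φ x) ^ 2))
      = β * (∑ x : Site d N, lamSite lamm lamp i0 x * φ x)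
        - β / 2 * ∑ x : Site d N, (φ x) ^ 2 := by
    rw [Finset.mul_sum, Finset.mul_sum, ← Finset.sum_sub_distrib]
    exact Finset.sum_congr rfl fun x _ => by ring
  rw [e1, e2]
  ring

lemma pfBase_def' : pfBase d N
    = (Measure.count : Measure (Spin d N)).prod (volume : Measure (Conf d N)) := rfl

lemma base_meas (F : PF d N → ℝ) (hc : ∀ σ : Spin d N, Continuous fun φ => F (σ, φ)) :
    Measurable F := by
  have hf : Measurable fun p : Conf d N × Spin d N => F (p.2, p.1) :=
    measurable_from_prod_countable_left fun σ => (hc σ).measurable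
  exact hf.comp measurable_swap

lemma base_integrable (F : PF d N → ℝ) (hc : ∀ σ : Spin d N, Continuous fun φ => F (σ, φ))
    (hs : ∀ σ : Spin d N, HasCompactSupport fun φ => F (σ, φ)) :
    Integrable F (pfBase d N) := by
  rw [pfBase_def', integrable_prod_iff (base_meas F hc).aestronglyMeasurable]
  constructor
  · exact MeasureTheory.ae_of_all _ fun σ => cts_int (hc σ) (hs σ)
  · exact Integrable.of_finite

lemma base_integral_eq (F : PF d N → ℝ) (hc : ∀ σ : Spin d N, Continuous fun φ => F (σ, φ))
    (hs : ∀ σ : Spin d N, HasCompactSupport fun φ => F (σ, φ)) :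
    ∫ z, F z ∂(pfBase d N) = ∑ σ : Spin d N, ∫ φ : Conf d N, F (σ, φ) := by
  rw [pfBase_def', MeasureTheory.integral_prod F (by
    rw [← pfBase_def']; exact base_integrable F hc hs)]
  rw [integral_fintype _]
  refine Finset.sum_congr rfl fun σ _ => ?_
  rw [Measure.real, Measure.count_singleton]
  simp
  exact Integrable.of_finite

end PFaux
namespace PFaux
open MeasureTheory
variable {d N : ℕ}

lemma bond_slice (β : ℝ) (x y : Site d N) (g : PF d N → ℝ) (σ : Spin d N) :
    (fun φ : Conf d N => pfLbond β x y g (σ, φ))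
      = fun φ : Conf d N =>
        -((φ x - φ y) * (D1 (fun ψ => g (σ, ψ)) x φ - D1 (fun ψ => g (σ, ψ)) y φ))
          + 1 / β * (D1 (D1 (fun ψ => g (σ, ψ)) x) x φ - D1 (D1 (fun ψ => g (σ, ψ)) x) y φ
              - D1 (D1 (fun ψ => g (σ, ψ)) y) x φ + D1 (D1 (fun ψ => g (σ, ψ)) y) y φ) := rfl

lemma bop_slice (β c : ℝ) (x : Site d N) (g : PF d N → ℝ) (σ : Spin d N) :
    (fun φ : Conf d N => pfBop β c x g (σ, φ))
      = fun φ : Conf d N =>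
        -((φ x - c) * D1 (fun ψ => g (σ, ψ)) x φ)
          + 1 / β * D1 (D1 (fun ψ => g (σ, ψ)) x) x φ := rfl

lemma hcs_neg {f : Conf d N → ℝ} (hf : HasCompactSupport f) :
    HasCompactSupport fun φ => -(f φ) :=
  hf.comp_left (g := fun r : ℝ => -r) (by simp)

lemma bond_slice_reg (β : ℝ) (x y : Site d N) (g : PF d N → ℝ) (σ : Spin d N)
    (hg : ContDiff ℝ (⊤ : ℕ∞) fun ψ : Conf d N => g (σ, ψ))
    (hgs : HasCompactSupport fun ψ : Conf d N => g (σ, ψ)) :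
    Continuous (fun φ : Conf d N => pfLbond β x y g (σ, φ))
      ∧ HasCompactSupport fun φ : Conf d N => pfLbond β x y g (σ, φ) := by
  rw [bond_slice]
  set u : Conf d N → ℝ := fun ψ => g (σ, ψ)
  constructor
  · apply Continuous.add
    · exact (((continuous_apply x).sub (continuous_apply y)).mul
        ((D1_contDiff hg x).continuous.sub (D1_contDiff hg y).continuous)).neg
    · exact continuous_const.mul
        ((((D1_contDiff (D1_contDiff hg x) x).continuous.sub
          (D1_contDiff (D1_contDiff hg x) y).continuous).sub
          (D1_contDiff (D1_contDiff hg y) x).continuous).add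
          (D1_contDiff (D1_contDiff hg y) y).continuous)
  · apply HasCompactSupport.add
    · exact hcs_neg ((hcs_sub (D1_support hgs x) (D1_support hgs y)).mul_left)
    · exact HasCompactSupport.mul_left
        ((hcs_sub (hcs_sub (D1_support (D1_support hgs x) x) (D1_support (D1_support hgs x) y))
          (D1_support (D1_support hgs y) x)).add (D1_support (D1_support hgs y) y))

lemma bop_slice_reg (β c : ℝ) (x : Site d N) (g : PF d N → ℝ) (σ : Spin d N)
    (hg : ContDiff ℝ (⊤ : ℕ∞) fun ψ : Conf d N => g (σ, ψ))
    (hgs : HasCompactSupport fun ψ : Conf d N => g (σ, ψ)) :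
    Continuous (fun φ : Conf d N => pfBop β c x g (σ, φ))
      ∧ HasCompactSupport fun φ : Conf d N => pfBop β c x g (σ, φ) := by
  rw [bop_slice]
  constructor
  · apply Continuous.add
    · exact (((continuous_apply x).sub continuous_const).mul
        (D1_contDiff hg x).continuous).neg
    · exact continuous_const.mul (D1_contDiff (D1_contDiff hg x) x).continuous
  · apply HasCompactSupport.add
    · exact hcs_neg ((D1_support hgs x).mul_left)
    · exact (D1_support (D1_support hgs x) x).mul_left

lemma rest_zero (β lamm lamp : ℝ) (hβ : β ≠ 0) (i0 : Fin d) (hN0 : 0 < N) (σ : Spin d N)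
    (g : PF d N → ℝ) (hg : ContDiff ℝ (⊤ : ℕ∞) fun ψ : Conf d N => g (σ, ψ))
    (hgs : HasCompactSupport fun ψ : Conf d N => g (σ, ψ)) :
    ∫ φ : Conf d N,
      ((∑ x : Site d N, ∑ i : Fin d, if h : (x i : ℕ) + 1 < N
          then pfLbond β x (nxt x i h) g (σ, φ) else 0)
        + ((∑ x : Site d N, if (x i0 : ℕ) = 0 then pfBop β lamm x g (σ, φ) else 0)
        + (∑ x : Site d N, if (x i0 : ℕ) + 1 = N then pfBop β lamp x g (σ, φ) else 0)))
        * (pfF β lamm lamp i0 (σ, φ) * pfDensity β 0 (σ, φ)) = 0 := by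
  classical
  set u : Conf d N → ℝ := fun ψ => g (σ, ψ) with hu
  set w : Conf d N → ℝ := wgt β lamm lamp i0 with hw
  have hwc : Continuous w := wgt_continuous β lamm lamp i0
  -- integrability of the individual pieces (times w)
  have int_bond : ∀ x y : Site d N,
      Integrable fun φ : Conf d N => pfLbond β x y g (σ, φ) * w φ := fun x y =>
    cts_int ((bond_slice_reg β x y g σ hg hgs).1.mul hwc)
      ((bond_slice_reg β x y g σ hg hgs).2.mul_right)
  have int_bop : ∀ (c : ℝ) (x : Site d N),
      Integrable fun φ : Conf d N => pfBop β c x g (σ, φ) * w φ := fun c x =>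
    cts_int ((bop_slice_reg β c x g σ hg hgs).1.mul hwc)
      ((bop_slice_reg β c x g σ hg hgs).2.mul_right)
  have int_bond' : ∀ x : Site d N, ∀ i : Fin d,
      Integrable fun φ : Conf d N => if h : (x i : ℕ) + 1 < N
        then pfLbond β x (nxt x i h) g (σ, φ) * w φ else 0 := by
    intro x i
    by_cases h : (x i : ℕ) + 1 < N
    · simp only [dif_pos h]; exact int_bond x (nxt x i h)
    · simp only [dif_neg h]; exact integrable_zero _ _ _
  have int_b1 : ∀ x : Site d N,
      Integrable fun φ : Conf d N => if (x i0 : ℕ) = 0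
        then pfBop β lamm x g (σ, φ) * w φ else 0 := by
    intro x
    by_cases h : (x i0 : ℕ) = 0
    · simp only [if_pos h]; exact int_bop lamm x
    · simp only [if_neg h]; exact integrable_zero _ _ _
  have int_b2 : ∀ x : Site d N,
      Integrable fun φ : Conf d N => if (x i0 : ℕ) + 1 = N
        then pfBop β lamp x g (σ, φ) * w φ else 0 := by
    intro x
    by_cases h : (x i0 : ℕ) + 1 = N
    · simp only [if_pos h]; exact int_bop lamp x
    · simp only [if_neg h]; exact integrable_zero _ _ _
  -- rewrite the integrand in fully distributed form, with the constant pulled out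
  have e : ∀ φ : Conf d N,
      ((∑ x : Site d N, ∑ i : Fin d, if h : (x i : ℕ) + 1 < N
          then pfLbond β x (nxt x i h) g (σ, φ) else 0)
        + ((∑ x : Site d N, if (x i0 : ℕ) = 0 then pfBop β lamm x g (σ, φ) else 0)
        + (∑ x : Site d N, if (x i0 : ℕ) + 1 = N then pfBop β lamp x g (σ, φ) else 0)))
        * (pfF β lamm lamp i0 (σ, φ) * pfDensity β 0 (σ, φ))
      = spinC β lamm lamp i0 σ *
          ((∑ x : Site d N, ∑ i : Fin d, if h : (x i : ℕ) + 1 < N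
              then pfLbond β x (nxt x i h) g (σ, φ) * w φ else 0)
            + ((∑ x : Site d N, if (x i0 : ℕ) = 0 then pfBop β lamm x g (σ, φ) * w φ else 0)
            + (∑ x : Site d N, if (x i0 : ℕ) + 1 = N
                then pfBop β lamp x g (σ, φ) * w φ else 0))) := by
    intro φ
    rw [dens_factor β lamm lamp i0 σ φ]
    rw [← hw]
    have d1 : (∑ x : Site d N, ∑ i : Fin d, if h : (x i : ℕ) + 1 < N
        then pfLbond β x (nxt x i h) g (σ, φ) * w φ else 0)
        = (∑ x : Site d N, ∑ i : Fin d, if h : (x i : ℕ) + 1 < N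
            then pfLbond β x (nxt x i h) g (σ, φ) else 0) * w φ := by
      rw [Finset.sum_mul]
      refine Finset.sum_congr rfl fun x _ => ?_
      rw [Finset.sum_mul]
      refine Finset.sum_congr rfl fun i _ => ?_
      by_cases h : (x i : ℕ) + 1 < N
      · rw [dif_pos h, dif_pos h]
      · rw [dif_neg h, dif_neg h, zero_mul]
    have d2 : (∑ x : Site d N, if (x i0 : ℕ) = 0 then pfBop β lamm x g (σ, φ) * w φ else 0)
        = (∑ x : Site d N, if (x i0 : ℕ) = 0 then pfBop β lamm x g (σ, φ) else 0) * w φ := by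
      rw [Finset.sum_mul]
      refine Finset.sum_congr rfl fun x _ => ?_
      by_cases h : (x i0 : ℕ) = 0
      · rw [if_pos h, if_pos h]
      · rw [if_neg h, if_neg h, zero_mul]
    have d3 : (∑ x : Site d N, if (x i0 : ℕ) + 1 = N
          then pfBop β lamp x g (σ, φ) * w φ else 0)
        = (∑ x : Site d N, if (x i0 : ℕ) + 1 = N then pfBop β lamp x g (σ, φ) else 0)
            * w φ := by
      rw [Finset.sum_mul]
      refine Finset.sum_congr rfl fun x _ => ?_
      by_cases h : (x i0 : ℕ) + 1 = N
      · rw [if_pos h, if_pos h]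
      · rw [if_neg h, if_neg h, zero_mul]
    rw [d1, d2, d3]
    ring
  rw [MeasureTheory.integral_congr_ae (Filter.Eventually.of_forall e),
    MeasureTheory.integral_const_mul]
  -- now compute the inner integral and show it vanishes
  have inner : (∫ φ : Conf d N,
      ((∑ x : Site d N, ∑ i : Fin d, if h : (x i : ℕ) + 1 < N
          then pfLbond β x (nxt x i h) g (σ, φ) * w φ else 0)
        + ((∑ x : Site d N, if (x i0 : ℕ) = 0 then pfBop β lamm x g (σ, φ) * w φ else 0)
        + (∑ x : Site d N, if (x i0 : ℕ) + 1 = N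
            then pfBop β lamp x g (σ, φ) * w φ else 0)))) = 0 := by
    have I1 : Integrable fun φ : Conf d N =>
        ∑ x : Site d N, ∑ i : Fin d, if h : (x i : ℕ) + 1 < N
          then pfLbond β x (nxt x i h) g (σ, φ) * w φ else 0 :=
      integrable_finset_sum _ fun x _ => integrable_finset_sum _ fun i _ => int_bond' x i
    have I2 : Integrable fun φ : Conf d N =>
        ∑ x : Site d N, if (x i0 : ℕ) = 0 then pfBop β lamm x g (σ, φ) * w φ else 0 :=
      integrable_finset_sum _ fun x _ => int_b1 x
    have I3 : Integrable fun φ : Conf d N =>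
        ∑ x : Site d N, if (x i0 : ℕ) + 1 = N then pfBop β lamp x g (σ, φ) * w φ else 0 :=
      integrable_finset_sum _ fun x _ => int_b2 x
    have I23 : Integrable fun φ : Conf d N =>
        (∑ x : Site d N, if (x i0 : ℕ) = 0 then pfBop β lamm x g (σ, φ) * w φ else 0)
          + ∑ x : Site d N, if (x i0 : ℕ) + 1 = N then pfBop β lamp x g (σ, φ) * w φ else 0 :=
      I2.add I3
    rw [MeasureTheory.integral_add I1 I23, MeasureTheory.integral_add I2 I3]
    rw [MeasureTheory.integral_finset_sum _ fun x _ =>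
      integrable_finset_sum _ fun i _ => int_bond' x i]
    rw [MeasureTheory.integral_finset_sum _ fun x _ => int_b1 x]
    rw [MeasureTheory.integral_finset_sum _ fun x _ => int_b2 x]
    -- evaluate each integral
    set I : Site d N → ℝ := fun a => ∫ φ, D1 u a φ * w φ with hI
    have ev1 : ∀ x : Site d N,
        (∫ φ : Conf d N, ∑ i : Fin d, if h : (x i : ℕ) + 1 < N
          then pfLbond β x (nxt x i h) g (σ, φ) * w φ else 0)
        = ∑ i : Fin d, if h : (x i : ℕ) + 1 < N
            then (lamSite lamm lamp i0 (nxt x i h) - lamSite lamm lamp i0 x)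
              * (I x - I (nxt x i h)) else 0 := by
      intro x
      rw [MeasureTheory.integral_finset_sum _ fun i _ => int_bond' x i]
      refine Finset.sum_congr rfl fun i _ => ?_
      by_cases h : (x i : ℕ) + 1 < N
      · simp only [dif_pos h]
        exact bond_int β lamm lamp hβ i0 hg hgs x (nxt x i h)
      · simp only [dif_neg h]
        exact MeasureTheory.integral_zero _ _
    have ev2 : ∀ x : Site d N,
        (∫ φ : Conf d N, if (x i0 : ℕ) = 0 then pfBop β lamm x g (σ, φ) * w φ else 0)
        = if (x i0 : ℕ) = 0 then (lamm - lamSite lamm lamp i0 x) * I x else 0 := by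
      intro x
      by_cases h : (x i0 : ℕ) = 0
      · simp only [if_pos h]
        exact bdry_int β lamm lamp hβ i0 hg hgs x lamm
      · simp only [if_neg h]
        exact MeasureTheory.integral_zero _ _
    have ev3 : ∀ x : Site d N,
        (∫ φ : Conf d N, if (x i0 : ℕ) + 1 = N then pfBop β lamp x g (σ, φ) * w φ else 0)
        = if (x i0 : ℕ) + 1 = N then (lamp - lamSite lamm lamp i0 x) * I x else 0 := by
      intro x
      by_cases h : (x i0 : ℕ) + 1 = N
      · simp only [if_pos h]
        exact bdry_int β lamm lamp hβ i0 hg hgs x lamp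
      · simp only [if_neg h]
        exact MeasureTheory.integral_zero _ _
    rw [Finset.sum_congr rfl fun x _ => ev1 x, Finset.sum_congr rfl fun x _ => ev2 x,
      Finset.sum_congr rfl fun x _ => ev3 x]
    rw [← add_assoc]
    exact telescope lamm lamp i0 hN0 I
  rw [inner, mul_zero]

end PFaux
namespace PFaux
open MeasureTheory
variable {d N : ℕ}

lemma Lflip_slice_reg (β : ℝ) (x : Site d N) (σ : Spin d N) (g : PF d N → ℝ)
    (hgc : ∀ σ : Spin d N, Continuous fun φ => g (σ, φ))
    (hgs : ∀ σ : Spin d N, HasCompactSupport fun φ => g (σ, φ)) :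
    Continuous (fun φ : Conf d N => Lflip β x g (σ, φ))
      ∧ HasCompactSupport fun φ : Conf d N => Lflip β x g (σ, φ) := by
  have e : (fun φ : Conf d N => g (spinFlip x (σ, φ)))
      = (fun ψ : Conf d N => g (Function.update σ x (!(σ x)), ψ))
        ∘ (Homeomorph.addRight ((2 * sval (σ x)) • (Pi.single x 1 : Conf d N))) := by
    funext φ
    simp only [Function.comp_apply, Homeomorph.coe_addRight]
    rw [spinFlip_eq]
  have hgc' : Continuous fun φ : Conf d N => g (spinFlip x (σ, φ)) := by
    rw [e]; exact (hgc _).comp (Homeomorph.continuous _)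
  have hgs' : HasCompactSupport fun φ : Conf d N => g (spinFlip x (σ, φ)) := by
    rw [e]; exact (hgs _).comp_homeomorph _
  have eL : (fun φ : Conf d N => Lflip β x g (σ, φ))
      = fun φ => rate β x (σ, φ) * (g (spinFlip x (σ, φ)) - g (σ, φ)) := rfl
  rw [eL]
  exact ⟨(rate_slice_cont β x σ).mul (hgc'.sub (hgc σ)), (hcs_sub hgs' (hgs σ)).mul_left⟩

lemma Lgen_slice_reg (β lamm lamp : ℝ) (i0 : Fin d) (σ : Spin d N) (g : PF d N → ℝ)
    (hg : ∀ σ : Spin d N, ContDiff ℝ (⊤ : ℕ∞) fun φ => g (σ, φ))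
    (hgs : ∀ σ : Spin d N, HasCompactSupport fun φ => g (σ, φ)) :
    Continuous (fun φ : Conf d N => pfLgen β lamm lamp i0 g (σ, φ))
      ∧ HasCompactSupport fun φ : Conf d N => pfLgen β lamm lamp i0 g (σ, φ) := by
  have hgc : ∀ σ : Spin d N, Continuous fun φ => g (σ, φ) := fun σ => (hg σ).continuous
  have eG : (fun φ : Conf d N => pfLgen β lamm lamp i0 g (σ, φ))
      = fun φ : Conf d N =>
        ((∑ x : Site d N, Lflip β x g (σ, φ)) +
          (∑ x : Site d N, ∑ i : Fin d, if h : (x i : ℕ) + 1 < N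
            then pfLbond β x (nxt x i h) g (σ, φ) else 0)) +
        ((∑ x : Site d N, if (x i0 : ℕ) = 0 then pfBop β lamm x g (σ, φ) else 0) +
          (∑ x : Site d N, if (x i0 : ℕ) + 1 = N then pfBop β lamp x g (σ, φ) else 0)) := by
    funext φ
    show _ + _ + _ + _ = _
    ring
  rw [eG]
  constructor
  · apply Continuous.add
    · apply Continuous.add
      · exact continuous_finset_sum _ fun x _ => (Lflip_slice_reg β x σ g hgc hgs).1
      · refine continuous_finset_sum _ fun x _ => continuous_finset_sum _ fun i _ => ?_
        by_cases h : (x i : ℕ) + 1 < N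
        · simp only [dif_pos h]; exact (bond_slice_reg β x (nxt x i h) g σ (hg σ) (hgs σ)).1
        · simp only [dif_neg h]; exact continuous_const
    · apply Continuous.add
      · refine continuous_finset_sum _ fun x _ => ?_
        by_cases h : (x i0 : ℕ) = 0
        · simp only [if_pos h]; exact (bop_slice_reg β lamm x g σ (hg σ) (hgs σ)).1
        · simp only [if_neg h]; exact continuous_const
      · refine continuous_finset_sum _ fun x _ => ?_
        by_cases h : (x i0 : ℕ) + 1 = N
        · simp only [if_pos h]; exact (bop_slice_reg β lamp x g σ (hg σ) (hgs σ)).1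
        · simp only [if_neg h]; exact continuous_const
  · apply HasCompactSupport.add
    · apply HasCompactSupport.add
      · exact hcs_sum _ _ fun x _ => (Lflip_slice_reg β x σ g hgc hgs).2
      · refine hcs_sum _ _ fun x _ => hcs_sum _ _ fun i _ => ?_
        by_cases h : (x i : ℕ) + 1 < N
        · simp only [dif_pos h]; exact (bond_slice_reg β x (nxt x i h) g σ (hg σ) (hgs σ)).2
        · simp only [dif_neg h]; exact hcs_zero
    · apply HasCompactSupport.add
      · refine hcs_sum _ _ fun x _ => ?_
        by_cases h : (x i0 : ℕ) = 0
        · simp only [if_pos h]; exact (bop_slice_reg β lamm x g σ (hg σ) (hgs σ)).2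
        · simp only [if_neg h]; exact hcs_zero
      · refine hcs_sum _ _ fun x _ => ?_
        by_cases h : (x i0 : ℕ) + 1 = N
        · simp only [if_pos h]; exact (bop_slice_reg β lamp x g σ (hg σ) (hgs σ)).2
        · simp only [if_neg h]; exact hcs_zero

end PFaux
namespace PFaux
open MeasureTheory
variable {d N : ℕ}

lemma rest_slice_reg (β lamm lamp : ℝ) (i0 : Fin d) (σ : Spin d N) (g : PF d N → ℝ)
    (hg : ContDiff ℝ (⊤ : ℕ∞) fun φ : Conf d N => g (σ, φ))
    (hgs : HasCompactSupport fun φ : Conf d N => g (σ, φ)) :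
    Continuous (fun φ : Conf d N =>
      (∑ x : Site d N, ∑ i : Fin d, if h : (x i : ℕ) + 1 < N
          then pfLbond β x (nxt x i h) g (σ, φ) else 0)
        + ((∑ x : Site d N, if (x i0 : ℕ) = 0 then pfBop β lamm x g (σ, φ) else 0)
        + (∑ x : Site d N, if (x i0 : ℕ) + 1 = N then pfBop β lamp x g (σ, φ) else 0)))
    ∧ HasCompactSupport (fun φ : Conf d N =>
      (∑ x : Site d N, ∑ i : Fin d, if h : (x i : ℕ) + 1 < N
          then pfLbond β x (nxt x i h) g (σ, φ) else 0)
        + ((∑ x : Site d N, if (x i0 : ℕ) = 0 then pfBop β lamm x g (σ, φ) else 0)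
        + (∑ x : Site d N, if (x i0 : ℕ) + 1 = N then pfBop β lamp x g (σ, φ) else 0))) := by
  constructor
  · apply Continuous.add
    · refine continuous_finset_sum _ fun x _ => continuous_finset_sum _ fun i _ => ?_
      by_cases h : (x i : ℕ) + 1 < N
      · simp only [dif_pos h]; exact (bond_slice_reg β x (nxt x i h) g σ hg hgs).1
      · simp only [dif_neg h]; exact continuous_const
    · apply Continuous.add
      · refine continuous_finset_sum _ fun x _ => ?_
        by_cases h : (x i0 : ℕ) = 0
        · simp only [if_pos h]; exact (bop_slice_reg β lamm x g σ hg hgs).1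
        · simp only [if_neg h]; exact continuous_const
      · refine continuous_finset_sum _ fun x _ => ?_
        by_cases h : (x i0 : ℕ) + 1 = N
        · simp only [if_pos h]; exact (bop_slice_reg β lamp x g σ hg hgs).1
        · simp only [if_neg h]; exact continuous_const
  · apply HasCompactSupport.add
    · refine hcs_sum _ _ fun x _ => hcs_sum _ _ fun i _ => ?_
      by_cases h : (x i : ℕ) + 1 < N
      · simp only [dif_pos h]; exact (bond_slice_reg β x (nxt x i h) g σ hg hgs).2
      · simp only [dif_neg h]; exact hcs_zero
    · apply HasCompactSupport.add
      · refine hcs_sum _ _ fun x _ => ?_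
        by_cases h : (x i0 : ℕ) = 0
        · simp only [if_pos h]; exact (bop_slice_reg β lamm x g σ hg hgs).2
        · simp only [if_neg h]; exact hcs_zero
      · refine hcs_sum _ _ fun x _ => ?_
        by_cases h : (x i0 : ℕ) + 1 = N
        · simp only [if_pos h]; exact (bop_slice_reg β lamp x g σ hg hgs).2
        · simp only [if_neg h]; exact hcs_zero

end PFaux

open PFaux in
/-- Theorem 2.1 for the phase-field model -/
theorem pf_stationarity (d N : ℕ) (hd : 0 < d) (hN : 1 < N)
    (β lamm lamp : ℝ) (hβ : 0 < β)
    (g : PF d N → ℝ)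
    (hg : ∀ σ : Spin d N, ContDiff ℝ (⊤ : ℕ∞) (fun φ => g (σ, φ)))
    (hgs : ∀ σ : Spin d N, HasCompactSupport (fun φ => g (σ, φ))) :
    ∫ z, pfLgen β lamm lamp ⟨0, hd⟩ g z * pfF β lamm lamp ⟨0, hd⟩ z
        ∂(pfNu d N β 0) = 0 := by
  classical
  set i0 : Fin d := ⟨0, hd⟩ with hi0
  have hβ' : β ≠ 0 := ne_of_gt hβ
  have hN0 : 0 < N := by omega
  have hgc : ∀ σ : Spin d N, Continuous fun φ => g (σ, φ) := fun σ => (hg σ).continuous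
  unfold pfNu
  rw [MeasureTheory.integral_smul_measure]
  have hmeas : Measurable fun z : PF d N => (pfDensity β 0 z).toNNReal :=
    continuous_real_toNNReal.measurable.comp
      (base_meas (fun z : PF d N => pfDensity β 0 z) fun σ => pfDensity_slice_cont β 0 σ)
  have hwd : ((pfBase d N).withDensity fun z => ENNReal.ofReal (pfDensity β 0 z))
      = (pfBase d N).withDensity fun z =>
          ((fun z : PF d N => (pfDensity β 0 z).toNNReal) z : ℝ≥0∞) := rfl
  rw [hwd, integral_withDensity_eq_integral_smul hmeas]
  set M : PF d N → ℝ := fun z =>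
    pfLgen β lamm lamp i0 g z * pfF β lamm lamp i0 z * pfDensity β 0 z with hM
  have hcongr : ∀ z : PF d N,
      (pfDensity β 0 z).toNNReal • (pfLgen β lamm lamp i0 g z * pfF β lamm lamp i0 z)
        = M z := by
    intro z
    rw [NNReal.smul_def, Real.coe_toNNReal _
      (le_of_lt (by rw [pfDensity_zero]; exact Real.exp_pos _))]
    simp only [hM, smul_eq_mul]
    ring
  rw [MeasureTheory.integral_congr_ae (Filter.Eventually.of_forall hcongr)]
  have key : ∫ z, M z ∂(pfBase d N) = 0 := by
    have hc : ∀ σ : Spin d N, Continuous fun φ => M (σ, φ) := fun σ =>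
      ((Lgen_slice_reg β lamm lamp i0 σ g hg hgs).1.mul
        (pfF_slice_cont β lamm lamp i0 σ)).mul (pfDensity_slice_cont β 0 σ)
    have hs : ∀ σ : Spin d N, HasCompactSupport fun φ => M (σ, φ) := fun σ =>
      ((Lgen_slice_reg β lamm lamp i0 σ g hg hgs).2.mul_right).mul_right
    rw [base_integral_eq M hc hs]
    have hFρc : ∀ σ : Spin d N, Continuous fun φ : Conf d N =>
        pfF β lamm lamp i0 (σ, φ) * pfDensity β 0 (σ, φ) := fun σ =>
      (pfF_slice_cont β lamm lamp i0 σ).mul (pfDensity_slice_cont β 0 σ)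
    have intflip : ∀ (σ : Spin d N) (x : Site d N),
        Integrable fun φ : Conf d N => Lflip β x g (σ, φ)
          * (pfF β lamm lamp i0 (σ, φ) * pfDensity β 0 (σ, φ)) := fun σ x =>
      cts_int ((Lflip_slice_reg β x σ g hgc hgs).1.mul (hFρc σ))
        ((Lflip_slice_reg β x σ g hgc hgs).2.mul_right)
    have intrest : ∀ σ : Spin d N,
        Integrable fun φ : Conf d N =>
          ((∑ x : Site d N, ∑ i : Fin d, if h : (x i : ℕ) + 1 < N
              then pfLbond β x (nxt x i h) g (σ, φ) else 0)
            + ((∑ x : Site d N, if (x i0 : ℕ) = 0 then pfBop β lamm x g (σ, φ) else 0)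
            + (∑ x : Site d N, if (x i0 : ℕ) + 1 = N then pfBop β lamp x g (σ, φ) else 0)))
            * (pfF β lamm lamp i0 (σ, φ) * pfDensity β 0 (σ, φ)) := fun σ =>
      cts_int ((rest_slice_reg β lamm lamp i0 σ g (hg σ) (hgs σ)).1.mul (hFρc σ))
        ((rest_slice_reg β lamm lamp i0 σ g (hg σ) (hgs σ)).2.mul_right)
    have hsplit : ∀ σ : Spin d N,
        (∫ φ : Conf d N, M (σ, φ))
          = (∑ x : Site d N, ∫ φ : Conf d N, Lflip β x g (σ, φ)
              * (pfF β lamm lamp i0 (σ, φ) * pfDensity β 0 (σ, φ)))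
            + ∫ φ : Conf d N,
              ((∑ x : Site d N, ∑ i : Fin d, if h : (x i : ℕ) + 1 < N
                  then pfLbond β x (nxt x i h) g (σ, φ) else 0)
                + ((∑ x : Site d N, if (x i0 : ℕ) = 0
                      then pfBop β lamm x g (σ, φ) else 0)
                + (∑ x : Site d N, if (x i0 : ℕ) + 1 = N
                      then pfBop β lamp x g (σ, φ) else 0)))
                * (pfF β lamm lamp i0 (σ, φ) * pfDensity β 0 (σ, φ)) := by
      intro σ
      have e : ∀ φ : Conf d N, M (σ, φ)
          = (∑ x : Site d N, Lflip β x g (σ, φ)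
              * (pfF β lamm lamp i0 (σ, φ) * pfDensity β 0 (σ, φ)))
            + ((∑ x : Site d N, ∑ i : Fin d, if h : (x i : ℕ) + 1 < N
                then pfLbond β x (nxt x i h) g (σ, φ) else 0)
              + ((∑ x : Site d N, if (x i0 : ℕ) = 0 then pfBop β lamm x g (σ, φ) else 0)
              + (∑ x : Site d N, if (x i0 : ℕ) + 1 = N then pfBop β lamp x g (σ, φ) else 0)))
              * (pfF β lamm lamp i0 (σ, φ) * pfDensity β 0 (σ, φ)) := by
        intro φ
        simp only [hM]
        rw [← Finset.sum_mul]
        show (_ + _ + _ + _) * _ * _ = _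
        ring
      rw [MeasureTheory.integral_congr_ae (Filter.Eventually.of_forall e),
        MeasureTheory.integral_add (integrable_finset_sum _ fun x _ => intflip σ x)
          (intrest σ),
        MeasureTheory.integral_finset_sum _ fun x _ => intflip σ x]
    rw [Finset.sum_congr rfl fun σ _ => hsplit σ, Finset.sum_add_distrib]
    have h2 : (∑ σ : Spin d N, ∫ φ : Conf d N,
        ((∑ x : Site d N, ∑ i : Fin d, if h : (x i : ℕ) + 1 < N
            then pfLbond β x (nxt x i h) g (σ, φ) else 0)
          + ((∑ x : Site d N, if (x i0 : ℕ) = 0 then pfBop β lamm x g (σ, φ) else 0)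
          + (∑ x : Site d N, if (x i0 : ℕ) + 1 = N then pfBop β lamp x g (σ, φ) else 0)))
          * (pfF β lamm lamp i0 (σ, φ) * pfDensity β 0 (σ, φ))) = 0 :=
      Finset.sum_eq_zero fun σ _ => rest_zero β lamm lamp hβ' i0 hN0 σ g (hg σ) (hgs σ)
    have h1 : (∑ σ : Spin d N, ∑ x : Site d N, ∫ φ : Conf d N, Lflip β x g (σ, φ)
        * (pfF β lamm lamp i0 (σ, φ) * pfDensity β 0 (σ, φ))) = 0 := by
      rw [Finset.sum_comm]
      exact Finset.sum_eq_zero fun x _ => flip_part β lamm lamp i0 x g hgc hgs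
    rw [h1, h2, add_zero]
  rw [key, smul_zero]
end

section
/- (Microscopic conservation law behind the phase-field equation.) Let $L^{\rm bulk}=\sum_{y\in\Lambda}L_y+\sum_{y,i:\,y+e_i\in\Lambda}L_{y,y+e_i}$ be the bulk generator. For every $x\in\Lambda$, applying $L^{\rm bulk}$ to the coordinate function $(\sigma,\phi)\mapsto\sigma_x+\phi_x$ yields the discrete Laplacian of $\phi$ at $x$: $L^{\rm bulk}(\sigma_x+\phi_x)=\sum_{i=1}^d\big(\mathbf{1}[x+e_i\in\Lambda](\phi_{x+e_i}-\phi_x)+\mathbf{1}[x-e_i\in\Lambda](\phi_{x-e_i}-\phi_x)\big)$; in particular $L_y(\sigma_x+\phi_x)=0$ for every $y\in\Lambda$. -/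
open MeasureTheory Real
open scoped NNReal ENNReal

/-- The site `x - e_i` (meaningful when `x - e_i ∈ Λ`, i.e. when `0 < (x i : ℕ)`). -/
def prd {d N : ℕ} (x : Site d N) (i : Fin d) : Site d N :=
  Function.update x i ⟨(x i : ℕ) - 1, Nat.lt_of_le_of_lt (Nat.sub_le _ _) (x i).isLt⟩


/-!
A Glauber flip at `y` moves `2σ_y` from the spin to the Ginzburg–Landau variable at `y`, so
`ω_x = σ_x + φ_x` is unchanged by every flip. The bond operators see `ω_x` only through its
`φ`-part, which is linear: the diffusion term vanishes and the drift of the bonds `(x, x + e_i)`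
and `(x - e_i, x)` yields the discrete Laplacian of `φ` at `x`.
-/

section ConservationLaw

variable {d N : ℕ}

/-- The locally conserved quantity `ω_x = σ_x + φ_x`. -/
def pfOmega (x : Site d N) : PF d N → ℝ := fun z => sval (z.1 x) + z.2 x

theorem sval_not (b : Bool) : sval (!b) = -sval b := by
  cases b <;> simp [sval]

theorem pfOmega_spinFlip (x y : Site d N) (z : PF d N) :
    pfOmega x (spinFlip y z) = pfOmega x z := by
  unfold pfOmega spinFlip
  rcases eq_or_ne x y with rfl | hne
  · simp only [Function.update_self, sval_not]
    ring
  · simp only [Function.update_of_ne hne]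

theorem Lflip_pfOmega (β : ℝ) (x y : Site d N) (z : PF d N) :
    Lflip β y (pfOmega x) z = 0 := by
  simp only [Lflip, pfOmega_spinFlip, sub_self, mul_zero]

theorem pdφ_eq_zero_of_forall_eq {g : PF d N → ℝ} (f : Spin d N → ℝ)
    (hg : ∀ z, g z = f z.1) (w : Site d N) (z : PF d N) : pdφ g w z = 0 := by
  have hconst : (fun ψ => g (z.1, ψ)) = fun _ => f z.1 := funext fun ψ => hg (z.1, ψ)
  simp [pdφ, hconst]

theorem pdφ_pfOmega (x w : Site d N) (z : PF d N) :
    pdφ (pfOmega x) w z = if x = w then 1 else 0 := by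
  have h : HasFDerivAt (fun ψ : Conf d N => sval (z.1 x) + ψ x)
      (ContinuousLinearMap.proj (R := ℝ) (φ := fun _ : Site d N => ℝ) x) z.2 :=
    (ContinuousLinearMap.proj (R := ℝ) (φ := fun _ : Site d N => ℝ) x).hasFDerivAt.const_add _
  simp [pdφ, pfOmega, h.fderiv, Pi.single_apply]

theorem pfLbond_pfOmega (β : ℝ) (x y w : Site d N) (z : PF d N) :
    pfLbond β y w (pfOmega x) z =
      -((z.2 y - z.2 w) * ((if x = y then 1 else 0) - if x = w then 1 else 0)) := by
  have hpd2 : ∀ u v, pdφ (pdφ (pfOmega x) u) v z = 0 := fun u v =>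
    pdφ_eq_zero_of_forall_eq (fun _ => if x = u then 1 else 0) (pdφ_pfOmega x u) v z
  simp only [pfLbond, pdφ_pfOmega, hpd2]
  ring

theorem nxt_ne_self (y : Site d N) (i : Fin d) (h : (y i : ℕ) + 1 < N) : nxt y i h ≠ y := by
  intro he
  have := congrArg Fin.val (congrFun he i)
  simp [nxt] at this

theorem nxt_eq_iff {x y : Site d N} {i : Fin d} (h : (y i : ℕ) + 1 < N) :
    nxt y i h = x ↔ y = prd x i ∧ 0 < (x i : ℕ) := by
  constructor
  · intro he
    have hxi : (x i : ℕ) = (y i : ℕ) + 1 := by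
      simpa [nxt] using (congrArg Fin.val (congrFun he i)).symm
    refine ⟨funext fun j => ?_, by omega⟩
    rcases eq_or_ne j i with rfl | hj
    · ext; simp [prd, hxi]
    · simpa [prd, nxt, hj] using congrFun he j
  · rintro ⟨rfl, hx⟩
    funext j
    rcases eq_or_ne j i with rfl | hj
    · ext; simp [nxt, prd]; omega
    · simp [nxt, prd, hj]

theorem sum_dite_nxt_eq (x : Site d N) (i : Fin d) (g : Site d N → ℝ) :
    (∑ y : Site d N, if h : (y i : ℕ) + 1 < N then (if nxt y i h = x then g y else 0) else 0) =
      if 0 < (x i : ℕ) then g (prd x i) else 0 := by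
  by_cases hx : 0 < (x i : ℕ)
  · rw [if_pos hx, Finset.sum_eq_single (prd x i)]
    · have hlt : ((prd x i) i : ℕ) + 1 < N := by
        have := (x i).isLt
        simp only [prd, Function.update_self]
        omega
      rw [dif_pos hlt, if_pos ((nxt_eq_iff hlt).2 ⟨rfl, hx⟩)]
    · intro y _ hy
      split_ifs with h he
      · exact absurd ((nxt_eq_iff h).1 he).1 hy
      all_goals rfl
    · simp
  · rw [if_neg hx]
    refine Finset.sum_eq_zero fun y _ => ?_
    split_ifs with h he
    · exact absurd ((nxt_eq_iff h).1 he).2 hx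
    all_goals rfl

theorem sum_pfLbond_pfOmega (β : ℝ) (x : Site d N) (i : Fin d) (z : PF d N) :
    (∑ y : Site d N,
        if h : (y i : ℕ) + 1 < N then pfLbond β y (nxt y i h) (pfOmega x) z else 0) =
      (if h : (x i : ℕ) + 1 < N then z.2 (nxt x i h) - z.2 x else 0) +
        (if 0 < (x i : ℕ) then z.2 (prd x i) - z.2 x else 0) := by
  have hsplit : ∀ y : Site d N,
      (if h : (y i : ℕ) + 1 < N then pfLbond β y (nxt y i h) (pfOmega x) z else 0) =
        (if y = x then (if h : (x i : ℕ) + 1 < N then z.2 (nxt x i h) - z.2 x else 0) else 0) +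
          (if h : (y i : ℕ) + 1 < N then
            (if nxt y i h = x then z.2 y - z.2 x else 0) else 0) := by
    intro y
    by_cases h : (y i : ℕ) + 1 < N
    · rw [dif_pos h, dif_pos h, pfLbond_pfOmega]
      by_cases hyx : y = x
      · subst hyx
        rw [if_pos rfl, if_pos rfl, dif_pos h, if_neg (nxt_ne_self y i h).symm,
          if_neg (nxt_ne_self y i h)]
        ring
      · by_cases he : nxt y i h = x
        · simp [hyx, Ne.symm hyx, he]
        · simp [hyx, Ne.symm hyx, he, Ne.symm he]
    · by_cases hyx : y = x
      · subst hyx; simp [h]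
      · simp [h, hyx]
  rw [Finset.sum_congr rfl fun y _ => hsplit y, Finset.sum_add_distrib,
    Finset.sum_ite_eq' Finset.univ x, if_pos (Finset.mem_univ x), sum_dite_nxt_eq]

end ConservationLaw

theorem pf_conservation_law_general (d N : ℕ)
    (β : ℝ) (x : Site d N) :
    letI ω : PF d N → ℝ := fun z => sval (z.1 x) + z.2 x
    (∀ z : PF d N,
      (∑ y : Site d N, Lflip β y ω z) +
        (∑ y : Site d N, ∑ i : Fin d,
          if h : (y i : ℕ) + 1 < N then pfLbond β y (nxt y i h) ω z else 0) =
      ∑ i : Fin d,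
        ((if h : (x i : ℕ) + 1 < N then z.2 (nxt x i h) - z.2 x else 0) +
          (if 0 < (x i : ℕ) then z.2 (prd x i) - z.2 x else 0))) ∧
    (∀ (y : Site d N) (z : PF d N), Lflip β y ω z = 0) := by
  change (∀ z : PF d N, (∑ y, Lflip β y (pfOmega x) z) +
      (∑ y : Site d N, ∑ i : Fin d,
        if h : (y i : ℕ) + 1 < N then pfLbond β y (nxt y i h) (pfOmega x) z else 0) = _) ∧
    ∀ (y : Site d N) (z : PF d N), Lflip β y (pfOmega x) z = 0
  refine ⟨fun z => ?_, fun y z => Lflip_pfOmega β x y z⟩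
  rw [Finset.sum_eq_zero fun y _ => Lflip_pfOmega β x y z, zero_add, Finset.sum_comm]
  exact Finset.sum_congr rfl fun i _ => sum_pfLbond_pfOmega β x i z

/-- microscopic conservation law: the bulk generator
`L^bulk = ∑_y L_y + ∑_{y,i : y+e_i ∈ Λ} L_{y,y+e_i}` applied to the coordinate
function `ω_x = σ_x + φ_x` gives the discrete Laplacian of `φ` at `x`;
in particular each Glauber part `L_y` annihilates `ω_x`. -/
theorem pf_conservation_law (d N : ℕ) (hd : 0 < d) (hN : 1 < N)
    (β : ℝ) (hβ : 0 < β) (x : Site d N) :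
    letI ω : PF d N → ℝ := fun z => sval (z.1 x) + z.2 x
    (∀ z : PF d N,
      (∑ y : Site d N, Lflip β y ω z) +
        (∑ y : Site d N, ∑ i : Fin d,
          if h : (y i : ℕ) + 1 < N then pfLbond β y (nxt y i h) ω z else 0) =
      ∑ i : Fin d,
        ((if h : (x i : ℕ) + 1 < N then z.2 (nxt x i h) - z.2 x else 0) +
          (if 0 < (x i : ℕ) then z.2 (prd x i) - z.2 x else 0))) ∧
    (∀ (y : Site d N) (z : PF d N), Lflip β y ω z = 0) :=
  pf_conservation_law_general d N β x
end
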